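/- Suppose for each ℓ ∈ {1,…,L}: Π_ℓ : [0,1] → ℝ^{d×d} is differentiable, symmetric-matrix valued, and satisfies Π̇_ℓ − Π_ℓ a Π_ℓ + Q_ℓ + (A_ℓ − Σ_m Ā_{ℓm})ᵀ Π_ℓ + Π_ℓ (A_ℓ − Σ_m Ā_{ℓm}) = 0 on [0,1]; n_ℓ, m_ℓ : [0,1] → ℝ^d and Σ_ℓ : [0,1] → ℝ^{d×d} (symmetric-valued) are differentiable; and the n_ℓ satisfy ṅ_ℓ + (A_ℓ − Σ_m Ā_{ℓm} − a Π_ℓ)ᵀ n_ℓ + Σ_m Ā_{ℓm} n_m − Σ_m (Π_ℓ Ā_{ℓm} + Ā_{ℓm} Π_m) m_m = 0 on [0,1]. Then there exist differentiable functions c_ℓ : [0,1] → ℝ such that the quadratic functions λ_ℓ(t,x) = −½ xᵀ Π_ℓ(t) x + n_ℓ(t)ᵀ x + c_ℓ(t) satisfy, for every ℓ and every (t,x) ∈ [0,1] × ℝ^d, the equation ∂_t λ_ℓ(t,x) + ½ ∇λ_ℓ(t,x)ᵀ a ∇λ_ℓ(t,x) − ½ xᵀ Q_ℓ x + ∇λ_ℓ(t,x)ᵀ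 A_ℓ x − ∇λ_ℓ(t,x)ᵀ Σ_m Ā_{ℓm}(x − m_m(t)) − Σ_m [(n_m(t) − Π_m(t) m_m(t))ᵀ Ā_{mℓ} (m_m(t) − x) − Tr(Π_m(t) Ā_{mℓ} Σ_m(t))] − (ε/2) Tr(a Π_ℓ(t)) = 0, where ∇λ_ℓ(t,x) = −Π_ℓ(t) x + n_ℓ(t). -/

import Mathlib

/-!
Substituting the quadratic ansatz, the residual of the equation is a quadratic polynomial in `x`.
Once the symmetry of `a`, `Π_ℓ` and `Ā_{ℓm}` is used, its quadratic coefficient is the Riccati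
expression for `Π_ℓ` and its linear coefficient is the left-hand side of the equation for `n_ℓ`,
so both vanish. The remaining `x`-independent term is continuous in `t`, and `c_ℓ` is taken to be
an antiderivative of it; composing with the projection onto `[0, 1]` makes the derivative
two-sided at the endpoints.
-/

open Matrix

noncomputable section

namespace Stmt11

/-- The quadratic multiplier `λ_ℓ(t,x) = -½ xᵀ Π_ℓ(t) x + n_ℓ(t)ᵀ x + c_ℓ(t)`. -/
def lam {d : ℕ} (Pm : ℝ → Matrix (Fin d) (Fin d) ℝ) (n : ℝ → (Fin d → ℝ))
    (c : ℝ → ℝ) (t : ℝ) (x : Fin d → ℝ) : ℝ :=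
  -(1 / 2) * (x ⬝ᵥ (Pm t *ᵥ x)) + n t ⬝ᵥ x + c t

/-- Its spatial gradient `∇λ_ℓ(t,x) = -Π_ℓ(t) x + n_ℓ(t)`. -/
def gradLam {d : ℕ} (Pm : ℝ → Matrix (Fin d) (Fin d) ℝ) (n : ℝ → (Fin d → ℝ))
    (t : ℝ) (x : Fin d → ℝ) : Fin d → ℝ :=
  -(Pm t *ᵥ x) + n t

theorem exists_hasDerivAt_of_continuousOn_Icc {E : Type*} [NormedAddCommGroup E]
    [NormedSpace ℝ E] [CompleteSpace E] {a b : ℝ} (hab : a ≤ b) {f : ℝ → E}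
    (hf : ContinuousOn f (Set.Icc a b)) :
    ∃ F : ℝ → E, ∀ t ∈ Set.Icc a b, HasDerivAt F (f t) t := by
  have hcont : Continuous fun s => f (Set.projIcc a b hab s) :=
    hf.comp_continuous (continuous_subtype_val.comp continuous_projIcc)
      fun s => (Set.projIcc a b hab s).2
  refine ⟨fun u => ∫ s in a..u, f (Set.projIcc a b hab s), fun t ht => ?_⟩
  simpa only [Set.projIcc_of_mem hab ht] using (hcont.integral_hasStrictDerivAt a t).hasDerivAt

theorem continuousAt_of_hasDerivAt_entries {m n : Type*} {P : ℝ → Matrix m n ℝ}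
    {P' : Matrix m n ℝ} {t : ℝ} (hP : ∀ i j, HasDerivAt (fun s => P s i j) (P' i j) t) :
    ContinuousAt P t :=
  continuousAt_pi.2 fun i => continuousAt_pi.2 fun j => (hP i j).continuousAt

section

variable {n : Type*} [Fintype n]

theorem hasDerivAt_dotProduct_left {v : ℝ → n → ℝ} {v' : n → ℝ} {t : ℝ}
    (hv : ∀ i, HasDerivAt (fun s => v s i) (v' i) t) (x : n → ℝ) :
    HasDerivAt (fun s => v s ⬝ᵥ x) (v' ⬝ᵥ x) t :=
  HasDerivAt.fun_sum fun i _ => (hv i).mul_const (x i)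

theorem hasDerivAt_dotProduct_mulVec {P : ℝ → Matrix n n ℝ} {P' : Matrix n n ℝ} {t : ℝ}
    (hP : ∀ i j, HasDerivAt (fun s => P s i j) (P' i j) t) (x y : n → ℝ) :
    HasDerivAt (fun s => x ⬝ᵥ (P s *ᵥ y)) (x ⬝ᵥ (P' *ᵥ y)) t :=
  HasDerivAt.fun_sum fun i _ =>
    (HasDerivAt.fun_sum fun j _ => (hP i j).mul_const (y j)).const_mul (x i)

theorem mulVec_dotProduct (B : Matrix n n ℝ) (u v : n → ℝ) :
    (B *ᵥ u) ⬝ᵥ v = u ⬝ᵥ (Bᵀ *ᵥ v) :=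
  (dotProduct_comm _ _).trans (dotProduct_transpose_mulVec _ _ _).symm

theorem dotProduct_mulVec_mulVec_comm (u : n → ℝ) (B C : Matrix n n ℝ) (v : n → ℝ) :
    u ⬝ᵥ (B *ᵥ (C *ᵥ v)) = v ⬝ᵥ (Cᵀ *ᵥ (Bᵀ *ᵥ u)) := by
  rw [mulVec_mulVec, mulVec_mulVec, ← transpose_mul, dotProduct_transpose_mulVec]

end

theorem hasDerivAt_lam {d : ℕ} {P : ℝ → Matrix (Fin d) (Fin d) ℝ} {P' : Matrix (Fin d) (Fin d) ℝ}
    {n : ℝ → Fin d → ℝ} {n' : Fin d → ℝ} {c : ℝ → ℝ} {c' t : ℝ}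
    (hP : ∀ i j, HasDerivAt (fun s => P s i j) (P' i j) t)
    (hn : ∀ i, HasDerivAt (fun s => n s i) (n' i) t) (hc : HasDerivAt c c' t) (x : Fin d → ℝ) :
    HasDerivAt (fun s => lam P n c s x) (-(1 / 2) * (x ⬝ᵥ (P' *ᵥ x)) + n' ⬝ᵥ x + c') t :=
  (((hasDerivAt_dotProduct_mulVec hP x x).const_mul _).add
    (hasDerivAt_dotProduct_left hn x)).add hc

/-- The prescribed derivative `ċ_ℓ`: minus the `x`-independent part of the residual in
`hjb_residual_eq`. -/
def cDot {d L : ℕ} (ε : ℝ) (a : Matrix (Fin d) (Fin d) ℝ)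
    (Abar : Fin L → Fin L → Matrix (Fin d) (Fin d) ℝ) (P S : Fin L → Matrix (Fin d) (Fin d) ℝ)
    (N M : Fin L → Fin d → ℝ) (ℓ : Fin L) : ℝ :=
  -((1 / 2) * (N ℓ ⬝ᵥ (a *ᵥ N ℓ)) + N ℓ ⬝ᵥ (∑ m, Abar ℓ m *ᵥ M m)
    - (∑ m, ((N m - P m *ᵥ M m) ⬝ᵥ (Abar m ℓ *ᵥ M m) - (P m * Abar m ℓ * S m).trace))
    - (ε / 2) * (a * P ℓ).trace)

theorem hjb_residual_eq {d L : ℕ} (ε : ℝ) {a : Matrix (Fin d) (Fin d) ℝ} (ha : a.IsSymm)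
    (A Q P' : Matrix (Fin d) (Fin d) ℝ) {Abar : Fin L → Fin L → Matrix (Fin d) (Fin d) ℝ}
    (hAbarSymm : ∀ ℓ m, (Abar ℓ m).IsSymm) (hAbarExch : ∀ ℓ m, Abar ℓ m = Abar m ℓ)
    {ℓ : Fin L} (P : Fin L → Matrix (Fin d) (Fin d) ℝ) (hP : (P ℓ).IsSymm)
    (S : Fin L → Matrix (Fin d) (Fin d) ℝ) (N M : Fin L → Fin d → ℝ) (N' : Fin d → ℝ) (c' : ℝ)
    (x : Fin d → ℝ) :
    (-(1 / 2) * (x ⬝ᵥ (P' *ᵥ x)) + N' ⬝ᵥ x + c')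
      + (1 / 2) * ((-(P ℓ *ᵥ x) + N ℓ) ⬝ᵥ (a *ᵥ (-(P ℓ *ᵥ x) + N ℓ)))
      - (1 / 2) * (x ⬝ᵥ (Q *ᵥ x))
      + (-(P ℓ *ᵥ x) + N ℓ) ⬝ᵥ (A *ᵥ x)
      - (-(P ℓ *ᵥ x) + N ℓ) ⬝ᵥ (∑ m, Abar ℓ m *ᵥ (x - M m))
      - (∑ m, ((N m - P m *ᵥ M m) ⬝ᵥ (Abar m ℓ *ᵥ (M m - x)) - (P m * Abar m ℓ * S m).trace))
      - (ε / 2) * (a * P ℓ).trace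
    = -(1 / 2) * (x ⬝ᵥ ((P' - P ℓ * a * P ℓ + Q + (A - ∑ m, Abar ℓ m)ᵀ * P ℓ
          + P ℓ * (A - ∑ m, Abar ℓ m)) *ᵥ x))
      + (N' + (A - ∑ m, Abar ℓ m - a * P ℓ)ᵀ *ᵥ N ℓ + (∑ m, Abar ℓ m *ᵥ N m)
          - (∑ m, (P ℓ * Abar ℓ m + Abar ℓ m * P m) *ᵥ M m)) ⬝ᵥ x
      + (c' - cDot ε a Abar P S N M ℓ) := by
  simp only [cDot, ← hAbarExch _ ℓ]
  simp only [transpose_sub, transpose_mul, transpose_sum, ha.eq, hP.eq, (hAbarSymm _ _).eq,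
    sub_mulVec, add_mulVec, mulVec_sub, mulVec_add, mulVec_neg, ← mulVec_mulVec, sum_mulVec,
    mulVec_sum, dotProduct_sum, sum_dotProduct, dotProduct_add, add_dotProduct, dotProduct_sub,
    sub_dotProduct, dotProduct_neg, neg_dotProduct, Finset.sum_add_distrib,
    Finset.sum_sub_distrib]
  -- With every matrix moved into the second slot, the two sides still differ by the swaps
  -- `u ⬝ᵥ (B *ᵥ C *ᵥ v) = v ⬝ᵥ (Cᵀ *ᵥ Bᵀ *ᵥ u)`, which is where the symmetry of `Π_ℓ` enters.
  simp only [mulVec_dotProduct, transpose_transpose, Finset.sum_neg_distrib, ha.eq, hP.eq,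
    (hAbarSymm _ _).eq, dotProduct_mulVec_mulVec_comm x Aᵀ (P ℓ),
    dotProduct_mulVec_mulVec_comm _ (Abar _ ℓ) (P ℓ), dotProduct_mulVec_mulVec_comm (N ℓ) a (P ℓ)]
  ring

theorem statement_11_general {d p L : ℕ} (ε : ℝ)
    (σm : Matrix (Fin d) (Fin p) ℝ)
    (A : Fin L → Matrix (Fin d) (Fin d) ℝ)
    (Abar : Fin L → Fin L → Matrix (Fin d) (Fin d) ℝ)
    (hAbarSymm : ∀ ℓ m, (Abar ℓ m).IsSymm)
    (hAbarExch : ∀ ℓ m, Abar ℓ m = Abar m ℓ)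
    (Q : Fin L → Matrix (Fin d) (Fin d) ℝ)
    (Pm Pm' : Fin L → ℝ → Matrix (Fin d) (Fin d) ℝ)
    (hPderiv : ∀ ℓ, ∀ t ∈ Set.Icc (0 : ℝ) 1, ∀ i j,
      HasDerivAt (fun s => Pm ℓ s i j) (Pm' ℓ t i j) t)
    (hPsymm : ∀ ℓ, ∀ t ∈ Set.Icc (0 : ℝ) 1, (Pm ℓ t).IsSymm)
    (hRiccati : ∀ ℓ, ∀ t ∈ Set.Icc (0 : ℝ) 1,
      Pm' ℓ t - Pm ℓ t * (σm * σmᵀ) * Pm ℓ t + Q ℓ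
        + (A ℓ - ∑ m, Abar ℓ m)ᵀ * Pm ℓ t + Pm ℓ t * (A ℓ - ∑ m, Abar ℓ m) = 0)
    (n n' mv mv' : Fin L → ℝ → (Fin d → ℝ))
    (Sm Sm' : Fin L → ℝ → Matrix (Fin d) (Fin d) ℝ)
    (hnderiv : ∀ ℓ, ∀ t ∈ Set.Icc (0 : ℝ) 1, ∀ i,
      HasDerivAt (fun s => n ℓ s i) (n' ℓ t i) t)
    (hmderiv : ∀ ℓ, ∀ t ∈ Set.Icc (0 : ℝ) 1, ∀ i,
      HasDerivAt (fun s => mv ℓ s i) (mv' ℓ t i) t)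
    (hSderiv : ∀ ℓ, ∀ t ∈ Set.Icc (0 : ℝ) 1, ∀ i j,
      HasDerivAt (fun s => Sm ℓ s i j) (Sm' ℓ t i j) t)
    (hneq : ∀ ℓ, ∀ t ∈ Set.Icc (0 : ℝ) 1,
      n' ℓ t + (A ℓ - ∑ m, Abar ℓ m - (σm * σmᵀ) * Pm ℓ t)ᵀ *ᵥ n ℓ t
        + (∑ m, Abar ℓ m *ᵥ n m t)
        - (∑ m, (Pm ℓ t * Abar ℓ m + Abar ℓ m * Pm m t) *ᵥ mv m t) = 0) :
    ∃ c : Fin L → ℝ → ℝ,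
      (∀ ℓ, ∀ t ∈ Set.Icc (0 : ℝ) 1, DifferentiableAt ℝ (c ℓ) t) ∧
      ∀ ℓ, ∀ t ∈ Set.Icc (0 : ℝ) 1, ∀ x : Fin d → ℝ,
        deriv (fun s => lam (Pm ℓ) (n ℓ) (c ℓ) s x) t
          + (1 / 2) * (gradLam (Pm ℓ) (n ℓ) t x ⬝ᵥ ((σm * σmᵀ) *ᵥ gradLam (Pm ℓ) (n ℓ) t x))
          - (1 / 2) * (x ⬝ᵥ (Q ℓ *ᵥ x))
          + gradLam (Pm ℓ) (n ℓ) t x ⬝ᵥ (A ℓ *ᵥ x)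
          - gradLam (Pm ℓ) (n ℓ) t x ⬝ᵥ (∑ m, Abar ℓ m *ᵥ (x - mv m t))
          - (∑ m, ((n m t - Pm m t *ᵥ mv m t) ⬝ᵥ (Abar m ℓ *ᵥ (mv m t - x))
              - (Pm m t * Abar m ℓ * Sm m t).trace))
          - (ε / 2) * ((σm * σmᵀ) * Pm ℓ t).trace = 0 := by
  have ha : (σm * σmᵀ).IsSymm := by rw [IsSymm, transpose_mul, transpose_transpose]
  have hcont : ∀ ℓ, ContinuousOn (fun s => cDot ε (σm * σmᵀ) Abar (fun m => Pm m s)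
      (fun m => Sm m s) (fun m => n m s) (fun m => mv m s) ℓ) (Set.Icc 0 1) := by
    refine fun ℓ => continuousOn_of_forall_continuousAt fun t ht => ?_
    have hP m := continuousAt_of_hasDerivAt_entries (hPderiv m t ht)
    have hS m := continuousAt_of_hasDerivAt_entries (hSderiv m t ht)
    have hn m := continuousAt_pi.2 fun i => (hnderiv m t ht i).continuousAt
    have hm m := continuousAt_pi.2 fun i => (hmderiv m t ht i).continuousAt
    unfold cDot
    fun_prop
  choose c hc using fun ℓ => exists_hasDerivAt_of_continuousOn_Icc zero_le_one (hcont ℓ)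
  refine ⟨c, fun ℓ t ht => (hc ℓ t ht).differentiableAt, fun ℓ t ht x => ?_⟩
  rw [(hasDerivAt_lam (hPderiv ℓ t ht) (hnderiv ℓ t ht) (hc ℓ t ht) x).deriv]
  have hres := hjb_residual_eq ε ha (A ℓ) (Q ℓ) (Pm' ℓ t) hAbarSymm hAbarExch
    (fun m => Pm m t) (hPsymm ℓ t ht) (fun m => Sm m t) (fun m => n m t) (fun m => mv m t)
    (n' ℓ t) (cDot ε (σm * σmᵀ) Abar (fun m => Pm m t) (fun m => Sm m t) (fun m => n m t)
      (fun m => mv m t) ℓ) x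
  beta_reduce at hres
  simp only [gradLam, hres, hRiccati ℓ t ht, hneq ℓ t ht, sub_self, zero_mulVec, dotProduct_zero,
    zero_dotProduct, mul_zero, add_zero]

/-- In the linear-quadratic multi-species setting, if the `Π_ℓ`
solve the Riccati equations and the `n_ℓ` solve the linear equations stated in the
optimality system, then there exist differentiable `c_ℓ : [0,1] → ℝ` such that the
quadratic functions `λ_ℓ(t,x) = -½ xᵀΠ_ℓ(t)x + n_ℓ(t)ᵀx + c_ℓ(t)` satisfy the
Hamilton–Jacobi-type optimality PDE with the Gaussian convolution and integral terms
evaluated in closed form. -/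
theorem statement_11 {d p L : ℕ} (hL : 1 ≤ L) (ε : ℝ) (hε : 0 < ε)
    (σm : Matrix (Fin d) (Fin p) ℝ)
    (A : Fin L → Matrix (Fin d) (Fin d) ℝ)
    (Abar : Fin L → Fin L → Matrix (Fin d) (Fin d) ℝ)
    (hAbarSymm : ∀ ℓ m, (Abar ℓ m).IsSymm)
    (hAbarExch : ∀ ℓ m, Abar ℓ m = Abar m ℓ)
    (Q : Fin L → Matrix (Fin d) (Fin d) ℝ) (hQ : ∀ ℓ, (Q ℓ).IsSymm)
    (Pm Pm' : Fin L → ℝ → Matrix (Fin d) (Fin d) ℝ)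
    (hPderiv : ∀ ℓ, ∀ t ∈ Set.Icc (0 : ℝ) 1, ∀ i j,
      HasDerivAt (fun s => Pm ℓ s i j) (Pm' ℓ t i j) t)
    (hPsymm : ∀ ℓ, ∀ t ∈ Set.Icc (0 : ℝ) 1, (Pm ℓ t).IsSymm)
    (hRiccati : ∀ ℓ, ∀ t ∈ Set.Icc (0 : ℝ) 1,
      Pm' ℓ t - Pm ℓ t * (σm * σmᵀ) * Pm ℓ t + Q ℓ
        + (A ℓ - ∑ m, Abar ℓ m)ᵀ * Pm ℓ t + Pm ℓ t * (A ℓ - ∑ m, Abar ℓ m) = 0)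
    (n n' mv mv' : Fin L → ℝ → (Fin d → ℝ))
    (Sm Sm' : Fin L → ℝ → Matrix (Fin d) (Fin d) ℝ)
    (hnderiv : ∀ ℓ, ∀ t ∈ Set.Icc (0 : ℝ) 1, ∀ i,
      HasDerivAt (fun s => n ℓ s i) (n' ℓ t i) t)
    (hmderiv : ∀ ℓ, ∀ t ∈ Set.Icc (0 : ℝ) 1, ∀ i,
      HasDerivAt (fun s => mv ℓ s i) (mv' ℓ t i) t)
    (hSderiv : ∀ ℓ, ∀ t ∈ Set.Icc (0 : ℝ) 1, ∀ i j,
      HasDerivAt (fun s => Sm ℓ s i j) (Sm' ℓ t i j) t)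
    (hSsymm : ∀ ℓ, ∀ t ∈ Set.Icc (0 : ℝ) 1, (Sm ℓ t).IsSymm)
    (hneq : ∀ ℓ, ∀ t ∈ Set.Icc (0 : ℝ) 1,
      n' ℓ t + (A ℓ - ∑ m, Abar ℓ m - (σm * σmᵀ) * Pm ℓ t)ᵀ *ᵥ n ℓ t
        + (∑ m, Abar ℓ m *ᵥ n m t)
        - (∑ m, (Pm ℓ t * Abar ℓ m + Abar ℓ m * Pm m t) *ᵥ mv m t) = 0) :
    ∃ c : Fin L → ℝ → ℝ,
      (∀ ℓ, ∀ t ∈ Set.Icc (0 : ℝ) 1, DifferentiableAt ℝ (c ℓ) t) ∧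
      ∀ ℓ, ∀ t ∈ Set.Icc (0 : ℝ) 1, ∀ x : Fin d → ℝ,
        deriv (fun s => lam (Pm ℓ) (n ℓ) (c ℓ) s x) t
          + (1 / 2) * (gradLam (Pm ℓ) (n ℓ) t x ⬝ᵥ ((σm * σmᵀ) *ᵥ gradLam (Pm ℓ) (n ℓ) t x))
          - (1 / 2) * (x ⬝ᵥ (Q ℓ *ᵥ x))
          + gradLam (Pm ℓ) (n ℓ) t x ⬝ᵥ (A ℓ *ᵥ x)
          - gradLam (Pm ℓ) (n ℓ) t x ⬝ᵥ (∑ m, Abar ℓ m *ᵥ (x - mv m t))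
          - (∑ m, ((n m t - Pm m t *ᵥ mv m t) ⬝ᵥ (Abar m ℓ *ᵥ (mv m t - x))
              - (Pm m t * Abar m ℓ * Sm m t).trace))
          - (ε / 2) * ((σm * σmᵀ) * Pm ℓ t).trace = 0 :=
  statement_11_general ε σm A Abar hAbarSymm hAbarExch Q Pm Pm' hPderiv hPsymm hRiccati n n' mv mv'
    Sm Sm' hnderiv hmderiv hSderiv hneq

end Stmt11
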